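/- arXiv:1110.5781 — 6 statements merged into one kernel-verified Lean document; each statement's English description precedes it below -/
import Mathlib

section
/- Let 1 < B < 2, K_B = (B^2 + B - 1)/(B(B-1)), and f(x) = (x^2 + B - 1)/B. If a sequence (Z_n) of reals satisfies Z_n ≥ (B-1)/B for all n and Z_{n+1} ≤ f(Z_n) for all n, then K_B · Z_{n+1} ≤ (K_B · Z_n)^2 for all n, and hence the sequence 2^{-n} log(K_B Z_n) is non-increasing. -/
/-- If `1 < B < 2`, `K_B = (B² + B - 1)/(B(B-1))`, and a sequence of reals
satisfies `Z n ≥ (B-1)/B` and `Z (n+1) ≤ (Z n² + B - 1)/B` for all `n`, then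
`K_B Z (n+1) ≤ (K_B Z n)²` for all `n`, and `2^{-n} log (K_B Z n)` is
non-increasing. -/
theorem stmt4 (B : ℝ) (hB1 : 1 < B) (hB2 : B < 2) (Z : ℕ → ℝ)
    (hlb : ∀ n, Z n ≥ (B - 1) / B)
    (hrec : ∀ n, Z (n + 1) ≤ (Z n ^ 2 + B - 1) / B) :
    (∀ n, (B ^ 2 + B - 1) / (B * (B - 1)) * Z (n + 1) ≤
      ((B ^ 2 + B - 1) / (B * (B - 1)) * Z n) ^ 2) ∧
    Antitone (fun n : ℕ =>
      Real.log ((B ^ 2 + B - 1) / (B * (B - 1)) * Z n) / 2 ^ n) := by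
  have hB0 : (0:ℝ) < B := by linarith
  have hBm1 : (0:ℝ) < B - 1 := by linarith
  have hN : (0:ℝ) < B ^ 2 + B - 1 := by nlinarith
  have hD : (0:ℝ) < B * (B - 1) := by positivity
  have hZpos : ∀ n, 0 < Z n := fun n =>
    lt_of_lt_of_le (div_pos hBm1 hB0) (hlb n)
  have h1 : ∀ n, (B ^ 2 + B - 1) / (B * (B - 1)) * Z (n + 1) ≤
      ((B ^ 2 + B - 1) / (B * (B - 1)) * Z n) ^ 2 := by
    intro n
    have hZ := hlb n
    rw [ge_iff_le, div_le_iff₀ hB0] at hZ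
    have h2 := hrec n
    rw [le_div_iff₀ hB0] at h2
    rw [div_mul_eq_mul_div, mul_pow, div_pow, div_mul_eq_mul_div,
      div_le_div_iff₀ hD (by positivity)]
    have key : (B - 1) ^ 2 ≤ (Z n * B) ^ 2 :=
      pow_le_pow_left₀ (by linarith) hZ 2
    have key2 : (Z n ^ 2 + B - 1) * (B - 1) ≤ (B ^ 2 + B - 1) * Z n ^ 2 := by
      nlinarith [key]
    have key3 : Z (n + 1) * B * (B - 1) ≤ (B ^ 2 + B - 1) * Z n ^ 2 :=
      le_trans (mul_le_mul_of_nonneg_right h2 hBm1.le) key2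
    nlinarith [mul_le_mul_of_nonneg_left key3 (le_of_lt (mul_pos hN hD))]
  refine ⟨h1, antitone_nat_of_succ_le ?_⟩
  intro n
  have hKZ : ∀ m, 0 < (B ^ 2 + B - 1) / (B * (B - 1)) * Z m :=
    fun m => mul_pos (div_pos hN hD) (hZpos m)
  have hlog : Real.log ((B ^ 2 + B - 1) / (B * (B - 1)) * Z (n + 1)) ≤
      2 * Real.log ((B ^ 2 + B - 1) / (B * (B - 1)) * Z n) := by
    have := Real.log_le_log (hKZ (n + 1)) (h1 n)
    rwa [Real.log_pow, Nat.cast_ofNat] at this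
  rw [div_le_div_iff₀ (by positivity) (by positivity),
    show (2:ℝ) ^ (n + 1) = 2 * 2 ^ n from by ring]
  nlinarith [mul_le_mul_of_nonneg_right hlog (pow_nonneg (by norm_num : (0:ℝ) ≤ 2) n)]
end

section
/- With d the hierarchical distance on {1,...,2^n} and M_{ij} = m(d(i,j)) as above, the full spectrum of M is: λ_0 = m(0) + Σ_{k=1}^{n} 2^{k-1} m(k) with multiplicity 1, and for 1 ≤ p ≤ n, λ_p = m(0) + Σ_{k=1}^{n-p} 2^{k-1} m(k) − 2^{n-p} m(n+1−p) with multiplicity 2^{p-1}. -/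
open Polynomial Matrix Finset

/-- The hierarchical (binary tree) distance on `{0, 1, ..., 2^n - 1}`
(0-based indices). -/
noncomputable def hdist (i j : ℕ) : ℕ := sInf {p | i / 2 ^ p = j / 2 ^ p}

lemma hdist_self (i : ℕ) : hdist i i = 0 := by
  simp [hdist]

lemma hdist_comm (i j : ℕ) : hdist i j = hdist j i := by
  unfold hdist; congr 1; ext p; exact eq_comm

lemma hdist_add {n i j : ℕ} (hi : i < 2 ^ n) (hj : j < 2 ^ n) :
    hdist (2 ^ n + i) (2 ^ n + j) = hdist i j := by
  unfold hdist
  congr 1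
  ext p
  simp only [Set.mem_setOf_eq]
  rcases le_or_gt p n with hp | hp
  · have h2 : (2:ℕ) ^ n = 2 ^ (n - p) * 2 ^ p := by
      rw [← pow_add]; congr 1; omega
    rw [h2, add_comm, add_comm _ j, Nat.add_mul_div_right _ _ (Nat.pos_of_ne_zero (by positivity)),
      Nat.add_mul_div_right _ _ (Nat.pos_of_ne_zero (by positivity))]
    constructor
    · intro h; omega
    · intro h; omega
  · have h1 : 2 ^ n + i < 2 ^ p := by
      calc 2 ^ n + i < 2 ^ n + 2 ^ n := by omega
      _ = 2 ^ (n+1) := by ring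
      _ ≤ 2 ^ p := Nat.pow_le_pow_right (by norm_num) hp
    have h2 : 2 ^ n + j < 2 ^ p := by
      calc 2 ^ n + j < 2 ^ n + 2 ^ n := by omega
      _ = 2 ^ (n+1) := by ring
      _ ≤ 2 ^ p := Nat.pow_le_pow_right (by norm_num) hp
    rw [Nat.div_eq_of_lt h1, Nat.div_eq_of_lt h2, Nat.div_eq_of_lt (by omega),
      Nat.div_eq_of_lt (by omega)]

lemma hdist_cross {n i j : ℕ} (hi : i < 2 ^ n) (hj : j < 2 ^ n) :
    hdist i (2 ^ n + j) = n + 1 := by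
  unfold hdist
  have hset : {p | i / 2 ^ p = (2 ^ n + j) / 2 ^ p} = Set.Ici (n + 1) := by
    ext p
    simp only [Set.mem_setOf_eq, Set.mem_Ici]
    constructor
    · intro h
      by_contra hp
      push_neg at hp
      have hp' : p ≤ n := by omega
      have h1 : i / 2 ^ p < 2 ^ (n - p) := by
        apply Nat.div_lt_of_lt_mul
        calc i < 2 ^ n := hi
        _ = 2 ^ p * 2 ^ (n - p) := by rw [← pow_add]; congr 1; omega
      have h2 : 2 ^ (n - p) ≤ (2 ^ n + j) / 2 ^ p := by
        have : (2:ℕ) ^ n / 2 ^ p ≤ (2 ^ n + j) / 2 ^ p := Nat.div_le_div_right (by omega)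
        rwa [Nat.pow_div hp' (by norm_num)] at this
      omega
    · intro hp
      have h1 : i < 2 ^ p := lt_of_lt_of_le hi (Nat.pow_le_pow_right (by norm_num) (by omega))
      have h2 : 2 ^ n + j < 2 ^ p := by
        calc 2 ^ n + j < 2 ^ n + 2 ^ n := by omega
        _ = 2 ^ (n+1) := by ring
        _ ≤ 2 ^ p := Nat.pow_le_pow_right (by norm_num) hp
      rw [Nat.div_eq_of_lt h1, Nat.div_eq_of_lt h2]
  rw [hset, csInf_Ici]

/-! ### Characteristic polynomial tools -/

lemma charpoly_conj {ι : Type*} [DecidableEq ι] [Fintype ι]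
    (M P Q : Matrix ι ι ℝ) (h1 : Q * P = 1) (h2 : P * Q = 1) :
    (Q * M * P).charpoly = M.charpoly := by
  have key : charmatrix (Q * M * P) =
      (C : ℝ →+* ℝ[X]).mapMatrix Q * charmatrix M * (C : ℝ →+* ℝ[X]).mapMatrix P := by
    unfold charmatrix
    have hQP : (C : ℝ →+* ℝ[X]).mapMatrix Q * (C : ℝ →+* ℝ[X]).mapMatrix P = 1 := by
      rw [← _root_.map_mul, h1, _root_.map_one]
    have hscal : (C : ℝ →+* ℝ[X]).mapMatrix Q * Matrix.scalar ι (X : ℝ[X]) *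
        (C : ℝ →+* ℝ[X]).mapMatrix P = Matrix.scalar ι (X : ℝ[X]) := by
      rw [mul_assoc]
      have : Matrix.scalar ι (X : ℝ[X]) * (C : ℝ →+* ℝ[X]).mapMatrix P =
          (C : ℝ →+* ℝ[X]).mapMatrix P * Matrix.scalar ι (X : ℝ[X]) :=
        (scalar_commute (X : ℝ[X]) (fun r => Polynomial.commute_X r) _)
      rw [this, ← mul_assoc, hQP, one_mul]
    rw [mul_sub, sub_mul, hscal, _root_.map_mul, _root_.map_mul]
  rw [Matrix.charpoly, Matrix.charpoly, key, det_mul, det_mul]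
  have : ((C : ℝ →+* ℝ[X]).mapMatrix Q).det * ((C : ℝ →+* ℝ[X]).mapMatrix P).det = 1 := by
    rw [mul_comm, ← det_mul, ← _root_.map_mul, h2, _root_.map_one, det_one]
  rw [mul_comm (((C : ℝ →+* ℝ[X]).mapMatrix Q).det), mul_assoc, this, mul_one]

lemma charpoly_symm_blocks {ι : Type*} [DecidableEq ι] [Fintype ι]
    (A B : Matrix ι ι ℝ) :
    (Matrix.fromBlocks A B B A).charpoly = (A + B).charpoly * (A - B).charpoly := by
  let P : Matrix (ι ⊕ ι) (ι ⊕ ι) ℝ := Matrix.fromBlocks 1 0 1 1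
  let Q : Matrix (ι ⊕ ι) (ι ⊕ ι) ℝ := Matrix.fromBlocks 1 0 (-1) 1
  have h1 : Q * P = 1 := by
    simp [P, Q, Matrix.fromBlocks_multiply, ← Matrix.fromBlocks_one]
  have h2 : P * Q = 1 := by
    simp [P, Q, Matrix.fromBlocks_multiply, ← Matrix.fromBlocks_one]
  have key : Q * Matrix.fromBlocks A B B A * P =
      Matrix.fromBlocks (A + B) B 0 (A - B) := by
    simp [P, Q, Matrix.fromBlocks_multiply]
    and_intros <;> abel
  rw [← charpoly_conj (Matrix.fromBlocks A B B A) P Q h1 h2, key,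
    Matrix.charpoly_fromBlocks_zero₂₁]

/-! ### The hierarchical matrix and its spectrum -/

noncomputable def Hmat (n : ℕ) (m : ℕ → ℝ) : Matrix (Fin (2 ^ n)) (Fin (2 ^ n)) ℝ :=
  Matrix.of fun i j => m (hdist i.val j.val)

noncomputable def lam0 (n : ℕ) (m : ℕ → ℝ) : ℝ :=
  m 0 + ∑ k ∈ Finset.Icc 1 n, (2 : ℝ) ^ (k - 1) * m k

noncomputable def lam (n p : ℕ) (m : ℕ → ℝ) : ℝ :=
  m 0 + (∑ k ∈ Finset.Icc 1 (n - p), (2 : ℝ) ^ (k - 1) * m k) - 2 ^ (n - p) * m (n + 1 - p)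

noncomputable def spec (n : ℕ) (m : ℕ → ℝ) : Multiset ℝ :=
  {lam0 n m} + ∑ p ∈ Finset.Icc 1 n, Multiset.replicate (2 ^ (p - 1)) (lam n p m)

lemma sum_Icc_one (β : Type*) [AddCommMonoid β] (f : ℕ → β) (n : ℕ) :
    ∑ k ∈ Finset.Icc 1 n, f k = ∑ k ∈ Finset.range n, f (k + 1) := by
  induction n with
  | zero => simp
  | succ n ih => rw [Finset.sum_Icc_succ_top (by omega), ih, Finset.sum_range_succ]

lemma geom_Icc (n : ℕ) : ∑ k ∈ Finset.Icc 1 n, (2 : ℝ) ^ (k - 1) = 2 ^ n - 1 := by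
  rw [sum_Icc_one]
  simp only [Nat.add_sub_cancel]
  rw [geom_sum_eq (by norm_num)]
  norm_num

lemma sum_shift (n : ℕ) (m : ℕ → ℝ) (c : ℝ) :
    ∑ k ∈ Finset.Icc 1 n, (2 : ℝ) ^ (k - 1) * (m k + c) =
      (∑ k ∈ Finset.Icc 1 n, (2 : ℝ) ^ (k - 1) * m k) + ((2 : ℝ) ^ n - 1) * c := by
  simp only [mul_add]
  rw [Finset.sum_add_distrib, ← Finset.sum_mul, geom_Icc]

lemma e1 (n : ℕ) (m : ℕ → ℝ) : lam0 n (fun k => m k + m (n + 1)) = lam0 (n + 1) m := by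
  unfold lam0
  rw [Finset.sum_Icc_succ_top (by omega : 1 ≤ n + 1), sum_shift]
  simp only [Nat.add_sub_cancel]
  ring

lemma e2 (n : ℕ) (m : ℕ → ℝ) : lam0 n (fun k => m k - m (n + 1)) = lam (n + 1) 1 m := by
  unfold lam0 lam
  simp only [Nat.add_sub_cancel, show n + 1 + 1 - 1 = n + 1 by omega]
  have := sum_shift n m (-(m (n + 1)))
  simp only [← sub_eq_add_neg] at this
  rw [this]
  ring

lemma e3 (n p : ℕ) (m : ℕ → ℝ) (hp : 1 ≤ p) (hpn : p ≤ n) :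
    lam n p (fun k => m k + m (n + 1)) = lam (n + 1) (p + 1) m := by
  unfold lam
  simp only [show n + 1 - (p + 1) = n - p by omega, show n + 1 + 1 - (p + 1) = n + 1 - p by omega]
  rw [sum_shift]
  have h1 : n + 1 - p = (n - p) + 1 := by omega
  rw [h1]
  ring

lemma e4 (n p : ℕ) (m : ℕ → ℝ) (hp : 1 ≤ p) (hpn : p ≤ n) :
    lam n p (fun k => m k - m (n + 1)) = lam (n + 1) (p + 1) m := by
  unfold lam
  simp only [show n + 1 - (p + 1) = n - p by omega, show n + 1 + 1 - (p + 1) = n + 1 - p by omega]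
  have := sum_shift (n - p) m (-(m (n + 1)))
  simp only [← sub_eq_add_neg] at this
  rw [this]
  have h1 : n + 1 - p = (n - p) + 1 := by omega
  rw [h1]
  ring

lemma spec_succ (n : ℕ) (m : ℕ → ℝ) :
    spec (n + 1) m =
      spec n (fun k => m k + m (n + 1)) + spec n (fun k => m k - m (n + 1)) := by
  unfold spec
  have h3 : ∑ p ∈ Finset.Icc 1 n, Multiset.replicate (2 ^ (p - 1)) (lam n p (fun k => m k + m (n+1)))
      = ∑ p ∈ Finset.Icc 1 n, Multiset.replicate (2 ^ (p - 1)) (lam (n + 1) (p + 1) m) :=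
    Finset.sum_congr rfl (fun p hp => by
      rw [e3 n p m (Finset.mem_Icc.mp hp).1 (Finset.mem_Icc.mp hp).2])
  have h4 : ∑ p ∈ Finset.Icc 1 n, Multiset.replicate (2 ^ (p - 1)) (lam n p (fun k => m k - m (n+1)))
      = ∑ p ∈ Finset.Icc 1 n, Multiset.replicate (2 ^ (p - 1)) (lam (n + 1) (p + 1) m) :=
    Finset.sum_congr rfl (fun p hp => by
      rw [e4 n p m (Finset.mem_Icc.mp hp).1 (Finset.mem_Icc.mp hp).2])
  rw [h3, h4, e1, e2]
  have key : ∑ p ∈ Finset.Icc 1 (n + 1), Multiset.replicate (2 ^ (p - 1)) (lam (n + 1) p m)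
      = Multiset.replicate 1 (lam (n + 1) 1 m) +
        (∑ p ∈ Finset.Icc 1 n, Multiset.replicate (2 ^ (p - 1)) (lam (n + 1) (p + 1) m)) +
        (∑ p ∈ Finset.Icc 1 n, Multiset.replicate (2 ^ (p - 1)) (lam (n + 1) (p + 1) m)) := by
    rw [sum_Icc_one, Finset.sum_range_succ']
    simp only [Nat.add_sub_cancel, pow_zero]
    have h2 : ∀ q, (2 : ℕ) ^ (q + 1) = 2 ^ q + 2 ^ q := fun q => by rw [pow_succ, mul_two]
    have : ∀ q, Multiset.replicate (2 ^ (q + 1)) (lam (n + 1) (q + 1 + 1) m)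
        = Multiset.replicate (2 ^ q) (lam (n + 1) (q + 1 + 1) m)
          + Multiset.replicate (2 ^ q) (lam (n + 1) (q + 1 + 1) m) := fun q => by
      rw [h2, Multiset.replicate_add]
    rw [Finset.sum_congr rfl (fun q _ => this q), Finset.sum_add_distrib,
      sum_Icc_one _ (fun p => Multiset.replicate (2 ^ (p - 1)) (lam (n + 1) (p + 1) m))]
    simp only [Nat.add_sub_cancel]
    abel
  rw [key]
  have hone : ({lam (n + 1) 1 m} : Multiset ℝ) = Multiset.replicate 1 (lam (n + 1) 1 m) :=
    (Multiset.replicate_one _).symm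
  rw [hone]
  abel

/-! ### Block decomposition -/

def eqv (n : ℕ) : Fin (2 ^ n) ⊕ Fin (2 ^ n) ≃ Fin (2 ^ (n + 1)) :=
  finSumFinEquiv.trans (finCongr (by rw [pow_succ, mul_two]))

lemma eqv_inl (n : ℕ) (i : Fin (2 ^ n)) : ((eqv n) (Sum.inl i)).val = i.val := rfl

lemma eqv_inr (n : ℕ) (i : Fin (2 ^ n)) : ((eqv n) (Sum.inr i)).val = 2 ^ n + i.val := rfl

lemma Hmat_reindex (n : ℕ) (m : ℕ → ℝ) :
    Matrix.reindex (eqv n).symm (eqv n).symm (Hmat (n + 1) m) =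
      Matrix.fromBlocks (Hmat n m) (Matrix.of fun _ _ => m (n + 1))
        (Matrix.of fun _ _ => m (n + 1)) (Hmat n m) := by
  ext a b
  have H : ∀ a b, Matrix.reindex (eqv n).symm (eqv n).symm (Hmat (n + 1) m) a b
      = m (hdist ((eqv n) a).val ((eqv n) b).val) := by
    intro a b; rfl
  rw [H]
  cases a with
  | inl i =>
    cases b with
    | inl j => simp [Matrix.fromBlocks, Hmat, eqv_inl]
    | inr j =>
      simp only [Matrix.fromBlocks, eqv_inl, eqv_inr, Sum.elim_inl, Sum.elim_inr, of_apply]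
      rw [hdist_cross i.isLt j.isLt]
  | inr i =>
    cases b with
    | inl j =>
      simp only [Matrix.fromBlocks, eqv_inl, eqv_inr, Sum.elim_inl, Sum.elim_inr, of_apply]
      rw [hdist_comm, hdist_cross j.isLt i.isLt]
    | inr j =>
      simp only [Matrix.fromBlocks, eqv_inl, eqv_inr, Sum.elim_inl, Sum.elim_inr, of_apply, Hmat]
      rw [hdist_add i.isLt j.isLt]

theorem Hmat_roots (n : ℕ) : ∀ m : ℕ → ℝ, (Hmat n m).charpoly.roots = spec n m := by
  induction n with
  | zero =>
    intro m
    have hc : (Hmat 0 m).charpoly = X - C (m 0) := by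
      rw [Matrix.charpoly, Matrix.det_fin_one, charmatrix_apply_eq]
      have : Hmat 0 m 0 0 = m 0 := by simp [Hmat, hdist_self]
      rw [this]
    rw [hc, roots_X_sub_C]
    simp [spec, lam0]
  | succ n ih =>
    intro m
    have hc : (Hmat (n + 1) m).charpoly =
        (Hmat n (fun k => m k + m (n + 1))).charpoly *
          (Hmat n (fun k => m k - m (n + 1))).charpoly := by
      have hA : Hmat n m + (Matrix.of fun _ _ => m (n + 1)) =
          Hmat n (fun k => m k + m (n + 1)) := by
        ext i j; simp [Hmat]
      have hB : Hmat n m - (Matrix.of fun _ _ => m (n + 1)) =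
          Hmat n (fun k => m k - m (n + 1)) := by
        ext i j; simp [Hmat]
      rw [← Matrix.charpoly_reindex (eqv n).symm (Hmat (n + 1) m), Hmat_reindex,
        charpoly_symm_blocks, hA, hB]
    rw [hc, Polynomial.roots_mul
      (mul_ne_zero (Matrix.charpoly_monic _).ne_zero (Matrix.charpoly_monic _).ne_zero),
      ih, ih, spec_succ]

/-- The full spectrum (with multiplicities, as the multiset of roots of the
characteristic polynomial) of the `2^n × 2^n` matrix `M i j = m(d(i,j))`:
`λ₀ = m(0) + Σ_{k=1}^n 2^{k-1} m(k)` with multiplicity `1`, and for each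
`1 ≤ p ≤ n`, `λ_p = m(0) + Σ_{k=1}^{n-p} 2^{k-1} m(k) - 2^{n-p} m(n+1-p)` with
multiplicity `2^{p-1}`. -/
theorem stmt11 (n : ℕ) (m : ℕ → ℝ)
    (M : Matrix (Fin (2 ^ n)) (Fin (2 ^ n)) ℝ)
    (hM : ∀ i j, M i j = m (hdist i.val j.val)) :
    M.charpoly.roots =
      {(m 0 + ∑ k ∈ Finset.Icc 1 n, (2 : ℝ) ^ (k - 1) * m k)} +
        ∑ p ∈ Finset.Icc 1 n,
          Multiset.replicate (2 ^ (p - 1))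
            (m 0 + (∑ k ∈ Finset.Icc 1 (n - p), (2 : ℝ) ^ (k - 1) * m k)
              - 2 ^ (n - p) * m (n + 1 - p)) := by
  have hMH : M = Hmat n m := by
    ext i j
    rw [hM i j]
    rfl
  rw [hMH, Hmat_roots]
  rfl
end

section
/- For the Galton–Watson subtree count: for any n ≥ 1 and any nonempty I ⊆ {1,...,2^n}, the number of nodes v(n,I) of the spanning subtree satisfies v(n,I) ≤ |I| (2 + n − ⌊log₂ |I|⌋). -/
/-- `v(n, I)`: the number of nodes (root included, leaves excluded) of the
subtree of the complete binary tree of depth `n` spanned by the root and the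
leaves in `I` (leaves indexed 0-based; the ancestor of leaf `i` at depth `q`
is `i / 2^(n-q)`). -/
def vcount (n : ℕ) (I : Finset (Fin (2 ^ n))) : ℕ :=
  ∑ q ∈ Finset.range n, (I.image fun i => i.val / 2 ^ (n - q)).card

/-- For any `n ≥ 1` and any nonempty set `I` of leaves of the complete binary
tree of depth `n`, the number of nodes of the spanning subtree satisfies
`v(n,I) ≤ |I| (2 + n - ⌊log₂ |I|⌋)`. -/
theorem stmt15 (n : ℕ) (hn : 1 ≤ n) (I : Finset (Fin (2 ^ n))) (hI : I.Nonempty) :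
    vcount n I ≤ I.card * (2 + n - Nat.log 2 I.card) := by
  set m := I.card with hm
  set k := Nat.log 2 m with hkdef
  have hm0 : 0 < m := Finset.card_pos.mpr hI
  have hmn : m ≤ 2 ^ n := by
    calc m ≤ Fintype.card (Fin (2 ^ n)) := Finset.card_le_univ I
      _ = 2 ^ n := Fintype.card_fin _
  have hk : k ≤ n := by
    calc k ≤ Nat.log 2 (2 ^ n) := Nat.log_mono_right hmn
      _ = n := Nat.log_pow Nat.one_lt_two n
  have h2k : 2 ^ k ≤ m := Nat.pow_log_le_self 2 hm0.ne'
  have hterm1 : ∀ q, (I.image fun i => i.val / 2 ^ (n - q)).card ≤ m :=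
    fun q => Finset.card_image_le
  have hterm2 : ∀ q, q ≤ n → (I.image fun i => i.val / 2 ^ (n - q)).card ≤ 2 ^ q := by
    intro q hq
    have hsub : (I.image fun i => i.val / 2 ^ (n - q)) ⊆ Finset.range (2 ^ q) := by
      intro x hx
      simp only [Finset.mem_image] at hx
      obtain ⟨i, _, rfl⟩ := hx
      rw [Finset.mem_range, Nat.div_lt_iff_lt_mul (by positivity), ← pow_add]
      have hnq : q + (n - q) = n := by omega
      rw [hnq]; exact i.isLt
    calc (I.image fun i => i.val / 2 ^ (n - q)).card
        ≤ (Finset.range (2 ^ q)).card := Finset.card_le_card hsub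
      _ = 2 ^ q := Finset.card_range _
  have hsplit : vcount n I =
      (∑ q ∈ Finset.range k, (I.image fun i => i.val / 2 ^ (n - q)).card) +
      ∑ q ∈ Finset.Ico k n, (I.image fun i => i.val / 2 ^ (n - q)).card := by
    rw [vcount, Finset.range_eq_Ico, ← Finset.sum_Ico_consecutive _ (Nat.zero_le k) hk,
      ← Finset.range_eq_Ico]
  have h1 : (∑ q ∈ Finset.range k, (I.image fun i => i.val / 2 ^ (n - q)).card) ≤
      2 ^ k - 1 := by
    calc (∑ q ∈ Finset.range k, (I.image fun i => i.val / 2 ^ (n - q)).card)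
        ≤ ∑ q ∈ Finset.range k, 2 ^ q :=
          Finset.sum_le_sum fun q hq => hterm2 q (le_trans (Finset.mem_range.mp hq).le hk)
      _ = 2 ^ k - 1 := by
          induction k with
          | zero => simp
          | succ j ih => rw [Finset.sum_range_succ, ih]; have := Nat.one_le_two_pow (n := j); omega
  have h2 : (∑ q ∈ Finset.Ico k n, (I.image fun i => i.val / 2 ^ (n - q)).card) ≤
      (n - k) * m := by
    calc (∑ q ∈ Finset.Ico k n, (I.image fun i => i.val / 2 ^ (n - q)).card)
        ≤ ∑ _q ∈ Finset.Ico k n, m := Finset.sum_le_sum fun q _ => hterm1 q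
      _ = (n - k) * m := by rw [Finset.sum_const, Nat.card_Ico, smul_eq_mul]
  have : vcount n I ≤ (2 ^ k - 1) + (n - k) * m := by rw [hsplit]; exact Nat.add_le_add h1 h2
  have hfinal : (2 ^ k - 1) + (n - k) * m ≤ m * (2 + n - k) := by
    have h2k1 : 2 ^ k - 1 ≤ m := by omega
    have : 2 + n - k = (n - k) + 2 := by omega
    rw [this, Nat.mul_add]
    have : m * (n - k) = (n - k) * m := Nat.mul_comm _ _
    omega
  exact le_trans this hfinal
end

section
/- Let 1 < B < 2 and, for u ∈ ℝ, define the homogeneous hierarchical pinning recursion R_0 = e^u, R_{k+1} = (R_k² + B − 1)/B. There exist constants a_0 > 0 and c_0 > 0 (depending only on B) such that for every n ≥ 0 and every 0 ≤ u ≤ a_0 (B/2)^n, one has R_n ≤ exp(c_0 u (2/B)^n). -/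
set_option maxHeartbeats 1000000


/-- Linear-regime bound for the homogeneous hierarchical pinning recursion
`R 0 = e^u`, `R (k+1) = (R k² + B - 1)/B` with `1 < B < 2`: there are
constants `a₀, c₀ > 0` (depending only on `B`) such that for every `n` and
every `0 ≤ u ≤ a₀ (B/2)^n`, `R n ≤ exp(c₀ u (2/B)^n)`. -/
theorem stmt16 (B : ℝ) (hB1 : 1 < B) (hB2 : B < 2) :
    ∃ a₀ > (0 : ℝ), ∃ c₀ > (0 : ℝ), ∀ (u : ℝ) (R : ℕ → ℝ),
      R 0 = Real.exp u → (∀ k, R (k + 1) = (R k ^ 2 + B - 1) / B) →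
      ∀ n : ℕ, 0 ≤ u → u ≤ a₀ * (B / 2) ^ n →
        R n ≤ Real.exp (c₀ * u * (2 / B) ^ n) := by
  have hB0 : (0:ℝ) < B := by linarith
  have hexp1 : Real.exp 1 < 2.7182818286 := Real.exp_one_lt_d9
  refine ⟨(2 - B) / (5 * B), div_pos (by linarith) (by linarith), 9, by norm_num, ?_⟩
  intro u R hR0 hRrec n hu hua
  set a₀ : ℝ := (2 - B) / (5 * B) with ha₀
  have hBpos2 : (0:ℝ) < B / 2 := by linarith
  have hB2le1 : B / 2 ≤ 1 := by linarith
  have h2B1 : (1:ℝ) < 2 / B := by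
    rw [lt_div_iff₀ hB0]; linarith
  have h2Bpos : (0:ℝ) < 2 / B := by linarith
  have ha₀pos : 0 < a₀ := div_pos (by linarith) (by linarith)
  have ha₀le : a₀ ≤ 1 / 5 := by
    rw [ha₀, div_le_div_iff₀ (by linarith) (by norm_num)]
    nlinarith
  have hpowle : (B / 2) ^ n ≤ 1 := pow_le_one₀ hBpos2.le hB2le1
  have hu1 : u ≤ a₀ := by
    calc u ≤ a₀ * (B / 2) ^ n := hua
    _ ≤ a₀ * 1 := by nlinarith [pow_nonneg hBpos2.le n]
    _ = a₀ := by ring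
  have hu15 : u ≤ 1 / 5 := hu1.trans ha₀le
  -- key induction
  have key : ∀ k, k ≤ n →
      1 ≤ R k ∧ R k - 1 ≤ 3 * u * (2 / B) ^ k * Real.exp ((B / 2) ^ (n - k)) := by
    intro k
    induction k with
    | zero =>
      intro _
      constructor
      · rw [hR0]; exact Real.one_le_exp hu
      · rw [hR0]
        have h1 : Real.exp u * (1 - u) ≤ 1 := by
          have := Real.add_one_le_exp (-u)
          calc Real.exp u * (1 - u) ≤ Real.exp u * Real.exp (-u) := by
                nlinarith [Real.exp_pos u]
          _ = 1 := by rw [← Real.exp_add]; ring_nf; exact Real.exp_zero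
        have h2 : Real.exp u ≤ 3 := by
          calc Real.exp u ≤ Real.exp 1 := Real.exp_le_exp.mpr (by linarith)
          _ ≤ 3 := by linarith
        have h3 : Real.exp u - 1 ≤ u * Real.exp u := by nlinarith
        have h4 : (1:ℝ) ≤ Real.exp ((B / 2) ^ (n - 0)) :=
          Real.one_le_exp (by positivity)
        have h5 : (0:ℝ) ≤ 3 * u * (2 / B) ^ 0 := by
          have := pow_nonneg h2Bpos.le 0
          nlinarith
        calc Real.exp u - 1 ≤ u * Real.exp u := h3
        _ ≤ 3 * u := by nlinarith
        _ = 3 * u * (2 / B) ^ 0 * 1 := by ring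
        _ ≤ 3 * u * (2 / B) ^ 0 * Real.exp ((B / 2) ^ (n - 0)) := by nlinarith
    | succ k ih =>
      intro hk1
      have hk : k ≤ n := by omega
      obtain ⟨hR1, hP⟩ := ih hk
      set P : ℝ := R k - 1 with hPdef
      have hPnn : 0 ≤ P := by linarith
      have hrec : R (k + 1) - 1 = (2 * P + P ^ 2) / B := by
        rw [hRrec k, hPdef]
        field_simp
        ring
      -- abbreviations
      set s : ℝ := (B / 2) ^ (n - k) with hs
      have hspos : 0 < s := by positivity
      have hsle1 : s ≤ 1 := pow_le_one₀ hBpos2.le hB2le1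
      have ht : (B / 2) ^ (n - (k + 1)) = s * (2 / B) := by
        have hns : n - k = (n - (k + 1)) + 1 := by omega
        rw [hs, hns, pow_succ]
        field_simp
      have hpowsplit : (B / 2) ^ n * (2 / B) ^ k = s := by
        have h1 : (B / 2 : ℝ) ^ n = (B / 2) ^ (n - k) * (B / 2) ^ k := by
          rw [← pow_add]; congr 1; omega
        have h2 : (B / 2 : ℝ) ^ k * (2 / B) ^ k = 1 := by
          rw [← mul_pow]
          have : (B / 2 : ℝ) * (2 / B) = 1 := by field_simp
          rw [this, one_pow]
        rw [h1, mul_assoc, h2, mul_one, hs]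
      have hes : Real.exp s ≤ 3 := by
        calc Real.exp s ≤ Real.exp 1 := Real.exp_le_exp.mpr hsle1
        _ ≤ 3 := by linarith
      have hu2Bk : u * (2 / B) ^ k ≤ a₀ * s := by
        have h := mul_le_mul_of_nonneg_right hua (pow_nonneg h2Bpos.le k)
        rw [mul_assoc, hpowsplit] at h
        exact h
      have hPle : P ≤ 9 * a₀ * s := by
        calc P ≤ 3 * u * (2 / B) ^ k * Real.exp s := hP
        _ = 3 * (u * (2 / B) ^ k) * Real.exp s := by ring
        _ ≤ 3 * (a₀ * s) * Real.exp s := by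
            refine mul_le_mul_of_nonneg_right ?_ (Real.exp_pos s).le
            linarith
        _ ≤ 3 * (a₀ * s) * 3 := by
            refine mul_le_mul_of_nonneg_left hes ?_
            nlinarith [mul_pos ha₀pos hspos]
        _ = 9 * (a₀ * s) := by ring
        _ = 9 * a₀ * s := by ring
      -- P/2 ≤ s*(2/B - 1)
      have hhalf : P / 2 ≤ s * (2 / B - 1) := by
        have h2b : (2:ℝ) / B - 1 = (2 - B) / B := by field_simp
        have ha : 9 * a₀ / 2 ≤ (2 - B) / B := by
          have hab : a₀ * B = (2 - B) / 5 := by rw [ha₀]; field_simp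
          rw [div_le_div_iff₀ (by norm_num) hB0]
          nlinarith [hab]
        rw [h2b]
        have hsp : 0 < (2 - B) / B := div_pos (by linarith) hB0
        nlinarith
      have hfac : 1 + P / 2 ≤ Real.exp (s * (2 / B - 1)) := by
        calc 1 + P / 2 ≤ 1 + s * (2 / B - 1) := by linarith
        _ ≤ Real.exp (s * (2 / B - 1)) := by
            have := Real.add_one_le_exp (s * (2 / B - 1)); linarith
      constructor
      · have : 0 ≤ (2 * P + P ^ 2) / B := by positivity
        linarith [hrec]
      · rw [hrec, ht]
        have hstep : (2 * P + P ^ 2) / B = (2 / B) * (P * (1 + P / 2)) := by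
          field_simp
        rw [hstep]
        have hQnn : (0:ℝ) ≤ 3 * u * (2 / B) ^ k * Real.exp s := by
          have h0 : (0:ℝ) ≤ 3 * u := by linarith
          exact mul_nonneg (mul_nonneg h0 (pow_nonneg h2Bpos.le k)) (Real.exp_pos s).le
        have h2 : P * (1 + P / 2) ≤
            (3 * u * (2 / B) ^ k * Real.exp s) * Real.exp (s * (2 / B - 1)) :=
          mul_le_mul hP hfac (by linarith) hQnn
        have hexps : Real.exp s * Real.exp (s * (2 / B - 1)) = Real.exp (s * (2 / B)) := by
          rw [← Real.exp_add]; ring_nf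
        calc (2 / B) * (P * (1 + P / 2))
            ≤ (2 / B) * ((3 * u * (2 / B) ^ k * Real.exp s) * Real.exp (s * (2 / B - 1))) :=
              mul_le_mul_of_nonneg_left h2 h2Bpos.le
        _ = 3 * u * (2 / B) ^ (k + 1) * (Real.exp s * Real.exp (s * (2 / B - 1))) := by
              rw [pow_succ]; ring
        _ = 3 * u * (2 / B) ^ (k + 1) * Real.exp (s * (2 / B)) := by rw [hexps]
  -- conclude
  obtain ⟨hR1, hP⟩ := key n le_rfl
  have hnn : n - n = 0 := by omega
  rw [hnn] at hP
  simp only [pow_zero] at hP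
  have hupow : 0 ≤ u * (2 / B) ^ n := mul_nonneg hu (pow_nonneg h2Bpos.le n)
  have hPn : R n - 1 ≤ 9 * u * (2 / B) ^ n := by
    calc R n - 1 ≤ 3 * u * (2 / B) ^ n * Real.exp 1 := hP
    _ = 3 * (u * (2 / B) ^ n) * Real.exp 1 := by ring
    _ ≤ 9 * (u * (2 / B) ^ n) := by nlinarith
    _ = 9 * u * (2 / B) ^ n := by ring
  calc R n ≤ 1 + 9 * u * (2 / B) ^ n := by linarith
  _ ≤ Real.exp (9 * u * (2 / B) ^ n) := by
      have := Real.add_one_le_exp (9 * u * (2 / B) ^ n); linarith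
end

section
/- Let 1 < B < 2 and ν = log 2 / log(2/B). For the recursion R_0 = e^u, R_{k+1} = (R_k² + B − 1)/B with u ≥ 0, there exists a constant c > 0 (depending only on B) such that for all n ≥ 0 and all u ≥ 0, R_n ≤ c · exp(c u^ν 2^n). -/
private lemma stmt17_ge_one (B : ℝ) (hB1 : 1 < B) (u : ℝ) (hu : 0 ≤ u)
    (R : ℕ → ℝ) (h0 : R 0 = Real.exp u)
    (hrec : ∀ k, R (k + 1) = (R k ^ 2 + B - 1) / B) :
    ∀ k, 1 ≤ R k := by
  intro k
  induction k with
  | zero => rw [h0]; exact Real.one_le_exp hu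
  | succ k ih =>
    rw [hrec, le_div_iff₀ (by linarith)]
    nlinarith

private lemma stmt17_trivial (B : ℝ) (hB1 : 1 < B) (u : ℝ) (hu : 0 ≤ u)
    (R : ℕ → ℝ) (h0 : R 0 = Real.exp u)
    (hrec : ∀ k, R (k + 1) = (R k ^ 2 + B - 1) / B) :
    ∀ n, R n ≤ Real.exp (u * 2 ^ n) := by
  intro n
  induction n with
  | zero => rw [h0]; norm_num
  | succ n ih =>
    have h1 := stmt17_ge_one B hB1 u hu R h0 hrec n
    have hsq : (0:ℝ) ≤ R n ^ 2 - 1 := by nlinarith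
    have h2 : R (n + 1) ≤ R n ^ 2 := by
      rw [hrec, div_le_iff₀ (by linarith)]
      nlinarith [mul_nonneg (by linarith : (0:ℝ) ≤ B - 1) hsq]
    calc R (n + 1) ≤ R n ^ 2 := h2
      _ ≤ Real.exp (u * 2 ^ n) ^ 2 := by
          apply pow_le_pow_left₀ (by linarith) ih
      _ = Real.exp (u * 2 ^ (n + 1)) := by
          rw [pow_two, ← Real.exp_add]
          ring_nf

private lemma stmt17_phase1 (B : ℝ) (hB1 : 1 < B) (hB2 : B < 2) (u : ℝ) (hu : 0 ≤ u)
    (R : ℕ → ℝ) (h0 : R 0 = Real.exp u)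
    (hrec : ∀ k, R (k + 1) = (R k ^ 2 + B - 1) / B) :
    ∀ k, (Real.exp 1 * B / (2 * (2 - B))) * (Real.exp u - 1) * (2 / B) ^ k ≤ 1 →
      R k - 1 ≤ (Real.exp u - 1) * (2 / B) ^ k *
        Real.exp ((Real.exp 1 * B / (2 * (2 - B))) * (Real.exp u - 1) * (2 / B) ^ k) := by
  have hB0 : 0 < B := by linarith
  have h2B : (0:ℝ) < 2 - B := by linarith
  have hr1 : 1 < 2 / B := (one_lt_div hB0).2 hB2
  have hr0 : (0:ℝ) < 2 / B := by linarith
  have hε0 : 0 ≤ Real.exp u - 1 := by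
    have := Real.one_le_exp hu; linarith
  have he1 : (2.7182818283 : ℝ) < Real.exp 1 := Real.exp_one_gt_d9
  have hc₂0 : 0 < Real.exp 1 * B / (2 * (2 - B)) := by positivity
  intro k
  induction k with
  | zero =>
    intro _
    simp only [pow_zero, mul_one]
    have h1 : 1 ≤ Real.exp (Real.exp 1 * B / (2 * (2 - B)) * (Real.exp u - 1)) :=
      Real.one_le_exp (mul_nonneg hc₂0.le hε0)
    have h2 : R 0 - 1 = Real.exp u - 1 := by rw [h0]
    nlinarith
  | succ k ih =>
    intro hk1
    have hrkpos : (0:ℝ) < (2 / B) ^ k := pow_pos hr0 k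
    have hstep : Real.exp 1 * B / (2 * (2 - B)) * (Real.exp u - 1) * (2 / B) ^ k ≤
        Real.exp 1 * B / (2 * (2 - B)) * (Real.exp u - 1) * (2 / B) ^ (k + 1) := by
      rw [pow_succ]
      nlinarith [mul_nonneg (mul_nonneg hc₂0.le hε0) hrkpos.le]
    have hk : Real.exp 1 * B / (2 * (2 - B)) * (Real.exp u - 1) * (2 / B) ^ k ≤ 1 :=
      le_trans hstep hk1
    have ihk := ih hk
    have hR1 := stmt17_ge_one B hB1 u hu R h0 hrec k
    have hx0 : (0:ℝ) ≤ R k - 1 := by linarith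
    have hxe : R k - 1 ≤ Real.exp 1 * ((Real.exp u - 1) * (2 / B) ^ k) := by
      have h1 : Real.exp (Real.exp 1 * B / (2 * (2 - B)) * (Real.exp u - 1) * (2 / B) ^ k)
          ≤ Real.exp 1 := Real.exp_le_exp.2 hk
      have h2 : (Real.exp u - 1) * (2 / B) ^ k *
            Real.exp (Real.exp 1 * B / (2 * (2 - B)) * (Real.exp u - 1) * (2 / B) ^ k)
          ≤ (Real.exp u - 1) * (2 / B) ^ k * Real.exp 1 :=
        mul_le_mul_of_nonneg_left h1 (mul_nonneg hε0 hrkpos.le)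
      nlinarith [ihk]
    have hhalf : (Real.exp 1 * B / (2 * (2 - B))) * (2 / B - 1) = Real.exp 1 / 2 := by
      field_simp
    have h3 : 1 + (R k - 1) / 2 ≤
        Real.exp ((Real.exp 1 * B / (2 * (2 - B))) * (2 / B - 1) *
          ((Real.exp u - 1) * (2 / B) ^ k)) := by
      have ha : 1 + (R k - 1) / 2 ≤ Real.exp ((R k - 1) / 2) := by
        have := Real.add_one_le_exp ((R k - 1) / 2); linarith
      have hb : (R k - 1) / 2 ≤ (Real.exp 1 * B / (2 * (2 - B))) * (2 / B - 1) *
          ((Real.exp u - 1) * (2 / B) ^ k) := by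
        rw [hhalf]; linarith
      exact ha.trans (Real.exp_le_exp.2 hb)
    have hform : R (k + 1) - 1 = (2 / B) * (R k - 1) * (1 + (R k - 1) / 2) := by
      rw [hrec]
      field_simp
      ring
    rw [hform]
    have hA : (R k - 1) * (1 + (R k - 1) / 2) ≤
        ((Real.exp u - 1) * (2 / B) ^ k *
          Real.exp (Real.exp 1 * B / (2 * (2 - B)) * (Real.exp u - 1) * (2 / B) ^ k)) *
        Real.exp ((Real.exp 1 * B / (2 * (2 - B))) * (2 / B - 1) *
          ((Real.exp u - 1) * (2 / B) ^ k)) := by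
      apply mul_le_mul ihk h3 (by linarith) ?_
      exact mul_nonneg (mul_nonneg hε0 hrkpos.le) (Real.exp_pos _).le
    have hB' := mul_le_mul_of_nonneg_left hA hr0.le
    have harg : Real.exp 1 * B / (2 * (2 - B)) * (Real.exp u - 1) * (2 / B) ^ k +
        (Real.exp 1 * B / (2 * (2 - B))) * (2 / B - 1) * ((Real.exp u - 1) * (2 / B) ^ k)
        = Real.exp 1 * B / (2 * (2 - B)) * (Real.exp u - 1) * (2 / B) ^ (k + 1) := by
      rw [pow_succ]; ring
    calc (2 / B) * (R k - 1) * (1 + (R k - 1) / 2)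
        = (2 / B) * ((R k - 1) * (1 + (R k - 1) / 2)) := by ring
      _ ≤ (2 / B) * (((Real.exp u - 1) * (2 / B) ^ k *
            Real.exp (Real.exp 1 * B / (2 * (2 - B)) * (Real.exp u - 1) * (2 / B) ^ k)) *
            Real.exp ((Real.exp 1 * B / (2 * (2 - B))) * (2 / B - 1) *
              ((Real.exp u - 1) * (2 / B) ^ k))) := hB'
      _ = (Real.exp u - 1) * (2 / B) ^ (k + 1) *
            Real.exp (Real.exp 1 * B / (2 * (2 - B)) * (Real.exp u - 1) * (2 / B) ^ k +
              (Real.exp 1 * B / (2 * (2 - B))) * (2 / B - 1) *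
                ((Real.exp u - 1) * (2 / B) ^ k)) := by
          rw [Real.exp_add, pow_succ]; ring
      _ = (Real.exp u - 1) * (2 / B) ^ (k + 1) *
            Real.exp (Real.exp 1 * B / (2 * (2 - B)) * (Real.exp u - 1) * (2 / B) ^ (k + 1)) := by
          rw [harg]

private lemma stmt17_double (B : ℝ) (hB1 : 1 < B) (u : ℝ) (hu : 0 ≤ u)
    (R : ℕ → ℝ) (h0 : R 0 = Real.exp u)
    (hrec : ∀ k, R (k + 1) = (R k ^ 2 + B - 1) / B) (k : ℕ) :
    ∀ m, 2 * R (k + m) ≤ (2 * R k) ^ (2 ^ m) := by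
  intro m
  induction m with
  | zero => simp
  | succ m ih =>
    have h1 := stmt17_ge_one B hB1 u hu R h0 hrec (k + m)
    have hsq : (0:ℝ) ≤ R (k + m) ^ 2 - 1 := by nlinarith
    have hstep : 2 * R (k + m + 1) ≤ (2 * R (k + m)) ^ 2 := by
      rw [hrec, mul_div_assoc', div_le_iff₀ (by linarith)]
      nlinarith [mul_nonneg (by linarith : (0:ℝ) ≤ 2 * B - 1) hsq]
    calc 2 * R (k + (m + 1)) = 2 * R (k + m + 1) := by ring_nf
      _ ≤ (2 * R (k + m)) ^ 2 := hstep
      _ ≤ ((2 * R k) ^ (2 ^ m)) ^ 2 := by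
          apply pow_le_pow_left₀ (by linarith) ih
      _ = (2 * R k) ^ (2 ^ (m + 1)) := by
          rw [← pow_mul, pow_succ]

private lemma stmt17_min {p : ℕ → Prop} : ∀ k, p k → ∃ m, p m ∧ ∀ j < m, ¬ p j := by
  intro k
  induction k using Nat.strong_induction_on with
  | _ k ih =>
    intro hk
    by_cases h : ∃ j < k, p j
    · obtain ⟨j, hj, hpj⟩ := h
      exact ih j hj hpj
    · push_neg at h
      exact ⟨k, hk, fun j hj => by
        intro hpj
        exact absurd hpj (by simpa using h j hj)⟩

set_option maxHeartbeats 1600000 in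
/-- For the homogeneous hierarchical pinning recursion `R 0 = e^u`,
`R (k+1) = (R k² + B - 1)/B` with `1 < B < 2` and `ν = log 2 / log(2/B)`:
there is a constant `c > 0` (depending only on `B`) such that for all `n ≥ 0`
and all `u ≥ 0`, `R n ≤ c exp(c u^ν 2^n)`. -/
theorem stmt17 (B : ℝ) (hB1 : 1 < B) (hB2 : B < 2) :
    ∃ c > (0 : ℝ), ∀ (u : ℝ) (R : ℕ → ℝ),
      0 ≤ u → R 0 = Real.exp u → (∀ k, R (k + 1) = (R k ^ 2 + B - 1) / B) →
      ∀ n : ℕ,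
        R n ≤ c * Real.exp (c * u ^ (Real.log 2 / Real.log (2 / B)) * 2 ^ n) := by
  classical
  have hB0 : 0 < B := by linarith
  have h2B : (0:ℝ) < 2 - B := by linarith
  have hr1 : 1 < 2 / B := (one_lt_div hB0).2 hB2
  have hr0 : (0:ℝ) < 2 / B := by linarith
  have hr2 : 2 / B ≤ 2 := by rw [div_le_iff₀ hB0]; nlinarith
  have he1 : (2.7182818283 : ℝ) < Real.exp 1 := Real.exp_one_gt_d9
  have he3 : Real.exp 1 ≤ 3 := le_of_lt (by nlinarith [Real.exp_one_lt_d9])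
  set ν := Real.log 2 / Real.log (2 / B) with hνdef
  set c₂ := Real.exp 1 * B / (2 * (2 - B)) with hc₂def
  have hc₂0 : 0 < c₂ := by rw [hc₂def]; positivity
  have hc₂1 : 1 < c₂ := by
    rw [hc₂def, lt_div_iff₀ (by positivity)]
    nlinarith
  have h2c₂ : Real.exp 1 ≤ 2 * c₂ := by
    rw [hc₂def]
    rw [show 2 * (Real.exp 1 * B / (2 * (2 - B))) = Real.exp 1 * B / (2 - B) by
      field_simp]
    rw [le_div_iff₀ h2B]
    nlinarith
  have hlr : 0 < Real.log (2 / B) := Real.log_pos hr1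
  have hν1 : 1 ≤ ν := by
    rw [hνdef, le_div_iff₀ hlr]
    rw [one_mul]
    exact Real.log_le_log hr0 hr2
  have hν0 : 0 < ν := by linarith
  have hrν : (2 / B) ^ ν = 2 := by
    rw [Real.rpow_def_of_pos hr0, hνdef]
    rw [mul_div_assoc', mul_comm, mul_div_assoc, div_self hlr.ne', mul_one]
    exact Real.exp_log two_pos
  have hlog6 : Real.log 6 ≤ 2 := by
    have h62 : (6:ℝ) ≤ Real.exp 2 := by
      have : Real.exp 2 = Real.exp 1 * Real.exp 1 := by
        rw [← Real.exp_add]; norm_num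
      nlinarith
    calc Real.log 6 ≤ Real.log (Real.exp 2) :=
          Real.log_le_log (by norm_num) h62
      _ = 2 := Real.log_exp 2
  have hlog6' : 0 ≤ Real.log 6 := Real.log_nonneg (by norm_num)
  refine ⟨3 + (3 * c₂) ^ ν + 2 * (6 * c₂) ^ ν, by positivity, ?_⟩
  set c := 3 + (3 * c₂) ^ ν + 2 * (6 * c₂) ^ ν with hcdef
  have h3ν : 0 ≤ (3 * c₂) ^ ν := Real.rpow_nonneg (by positivity) ν
  have h6ν : 0 ≤ (6 * c₂) ^ ν := Real.rpow_nonneg (by positivity) ν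
  have hc3 : 3 ≤ c := by rw [hcdef]; linarith
  have hc1 : 1 ≤ c := by linarith
  have hc0 : 0 < c := by linarith
  intro u R hu h0 hrec n
  have hge1 : ∀ k, 1 ≤ R k := stmt17_ge_one B hB1 u hu R h0 hrec
  have htriv : ∀ m, R m ≤ Real.exp (u * 2 ^ m) := stmt17_trivial B hB1 u hu R h0 hrec
  have huν0 : 0 ≤ u ^ ν := Real.rpow_nonneg hu ν
  have h2n0 : (0:ℝ) ≤ 2 ^ n := by positivity
  -- helper for concluding from u * 2^n type exponents
  have hconc : ∀ t : ℝ, t ≤ c * u ^ ν * 2 ^ n → Real.exp t ≤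
      c * Real.exp (c * u ^ ν * 2 ^ n) := by
    intro t ht
    calc Real.exp t ≤ Real.exp (c * u ^ ν * 2 ^ n) := Real.exp_le_exp.2 ht
      _ ≤ c * Real.exp (c * u ^ ν * 2 ^ n) :=
          le_mul_of_one_le_left (Real.exp_pos _).le hc1
  rcases le_or_gt 1 u with h1u | h1u
  · -- u ≥ 1
    have h1 : u ≤ c * u ^ ν := by
      have h2 : u ^ (1:ℝ) ≤ u ^ ν := Real.rpow_le_rpow_of_exponent_le h1u hν1
      rw [Real.rpow_one] at h2
      nlinarith
    refine (htriv n).trans (hconc _ ?_)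
    exact mul_le_mul_of_nonneg_right h1 h2n0
  rcases hu.eq_or_lt with h0u | h0u
  · -- u = 0
    have hR1 : ∀ m, R m = 1 := by
      intro m
      induction m with
      | zero => rw [h0, ← h0u, Real.exp_zero]
      | succ m ih => rw [hrec, ih]; field_simp; ring
    rw [hR1 n, ← h0u, Real.zero_rpow hν0.ne', mul_zero, zero_mul, Real.exp_zero, mul_one]
    linarith
  -- 0 < u < 1
  have hε0 : 0 < Real.exp u - 1 := by
    have : Real.exp 0 < Real.exp u := Real.exp_lt_exp.2 h0u
    rw [Real.exp_zero] at this; linarith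
  have hε3u : Real.exp u - 1 ≤ 3 * u := by
    have h1 : 1 - u ≤ Real.exp (-u) := by
      have := Real.add_one_le_exp (-u); linarith
    have h2 : Real.exp u ≤ Real.exp 1 := Real.exp_le_exp.2 h1u.le
    have h3 : Real.exp (-u) * Real.exp u = 1 := by
      rw [← Real.exp_add]; simp
    nlinarith [Real.exp_pos u, mul_le_mul_of_nonneg_right h1 (Real.exp_pos u).le,
      mul_le_mul_of_nonneg_left (h2.trans he3) hu]
  have hex : ∃ k, 1 < c₂ * (Real.exp u - 1) * (2 / B) ^ k := by
    obtain ⟨k, hk⟩ := pow_unbounded_of_one_lt (1 / (c₂ * (Real.exp u - 1))) hr1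
    refine ⟨k, ?_⟩
    have hpos : 0 < c₂ * (Real.exp u - 1) := by positivity
    rw [div_lt_iff₀ hpos] at hk
    nlinarith
  obtain ⟨kw, hkw⟩ := hex
  obtain ⟨k₁, hspec, hmin⟩ := stmt17_min (p := fun j => 1 < c₂ * (Real.exp u - 1) * (2 / B) ^ j) kw hkw
  -- fact: if c₂ ε r^k ≤ 1 then R k ≤ 3
  have hR3 : ∀ k, c₂ * (Real.exp u - 1) * (2 / B) ^ k ≤ 1 → R k ≤ 3 := by
    intro k hk
    have hph := stmt17_phase1 B hB1 hB2 u hu R h0 hrec k hk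
    have hεr0 : 0 ≤ (Real.exp u - 1) * (2 / B) ^ k := by positivity
    have hexp : Real.exp (c₂ * (Real.exp u - 1) * (2 / B) ^ k) ≤ Real.exp 1 :=
      Real.exp_le_exp.2 hk
    have hA : (Real.exp u - 1) * (2 / B) ^ k *
          Real.exp (c₂ * (Real.exp u - 1) * (2 / B) ^ k)
        ≤ (Real.exp u - 1) * (2 / B) ^ k * (2 * c₂) :=
      mul_le_mul_of_nonneg_left (hexp.trans h2c₂) hεr0
    nlinarith [hph, hA, hk]
  rcases lt_or_ge n k₁ with hn | hn
  · -- n < k₁ : R n ≤ 3 ≤ c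
    have hnk : ¬ (1 < c₂ * (Real.exp u - 1) * (2 / B) ^ n) := hmin n hn
    push_neg at hnk
    have hRn3 := hR3 n hnk
    calc R n ≤ 3 := hRn3
      _ ≤ c := hc3
      _ = c * 1 := (mul_one c).symm
      _ ≤ c * Real.exp (c * u ^ ν * 2 ^ n) := by
          apply mul_le_mul_of_nonneg_left _ hc0.le
          exact Real.one_le_exp (by positivity)
  rcases Nat.eq_zero_or_pos k₁ with hk0 | hk1pos
  · -- k₁ = 0 : u is bounded below
    rw [hk0, pow_zero, mul_one] at hspec
    have h3cu : 1 ≤ 3 * c₂ * u := by nlinarith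
    have hx : 3 * c₂ * u ≤ (3 * c₂ * u) ^ ν := by
      have h2 : (3 * c₂ * u) ^ (1:ℝ) ≤ (3 * c₂ * u) ^ ν :=
        Real.rpow_le_rpow_of_exponent_le h3cu hν1
      rw [Real.rpow_one] at h2; exact h2
    have hm : (3 * c₂ * u) ^ ν = (3 * c₂) ^ ν * u ^ ν :=
      Real.mul_rpow (by positivity) hu
    have h1 : u ≤ c * u ^ ν := by
      have hcc : (3 * c₂) ^ ν * u ^ ν ≤ c * u ^ ν := by
        apply mul_le_mul_of_nonneg_right _ huν0
        rw [hcdef]; linarith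
      rw [hm] at hx
      nlinarith
    refine (htriv n).trans (hconc _ ?_)
    exact mul_le_mul_of_nonneg_right h1 h2n0
  -- main case : k₁ ≥ 1, n ≥ k₁
  set k := k₁ - 1 with hkdef
  have hkk : k + 1 = k₁ := Nat.succ_pred_eq_of_pos hk1pos
  have hkmin : c₂ * (Real.exp u - 1) * (2 / B) ^ k ≤ 1 := by
    have := hmin k (show k < k₁ by omega)
    push_neg at this; exact this
  have hkn : k ≤ n := by omega
  have hRk3 := hR3 k hkmin
  have hdb := stmt17_double B hB1 u hu R h0 hrec k (n - k)
  rw [Nat.add_sub_cancel' hkn] at hdb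
  have h6p : (2 * R k) ^ (2 ^ (n - k)) ≤ (6:ℝ) ^ (2 ^ (n - k)) := by
    apply pow_le_pow_left₀ (by linarith [hge1 k]) (by linarith)
  have hRn6 : R n ≤ (6:ℝ) ^ (2 ^ (n - k)) := by
    have := hge1 n; linarith
  have h6e : ((6:ℝ)) ^ (2 ^ (n - k)) = Real.exp ((2:ℝ) ^ (n - k) * Real.log 6) := by
    rw [show ((2:ℝ) ^ (n - k)) = ((2 ^ (n - k) : ℕ) : ℝ) by push_cast; ring]
    rw [Real.exp_nat_mul, Real.exp_log (by norm_num)]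
  -- exponent bound
  have hspec' : 1 < (c₂ * (Real.exp u - 1) * (2 / B)) * (2 / B) ^ k := by
    have h := hspec
    rw [← hkk, pow_succ] at h
    nlinarith [h]
  have hrk0 : (0:ℝ) < (2 / B) ^ k := pow_pos hr0 k
  have hinv : ((2 / B) ^ k)⁻¹ ≤ c₂ * (Real.exp u - 1) * (2 / B) := by
    calc ((2 / B) ^ k)⁻¹
        ≤ ((c₂ * (Real.exp u - 1) * (2 / B)) * (2 / B) ^ k) * ((2 / B) ^ k)⁻¹ :=
          le_mul_of_one_le_left (inv_nonneg.2 hrk0.le) hspec'.le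
      _ = c₂ * (Real.exp u - 1) * (2 / B) := by
          field_simp
  have h2keq : ((2:ℝ) ^ k) = ((2 / B) ^ k) ^ ν := by
    have e1 : (((2 / B) ^ k : ℝ)) ^ ν = ((2 / B) ^ ν) ^ (k:ℝ) := by
      rw [← Real.rpow_natCast (2 / B) k, ← Real.rpow_mul hr0.le,
        ← Real.rpow_mul hr0.le, mul_comm]
    rw [e1, hrν, Real.rpow_natCast]
  have h2k : ((2:ℝ) ^ k)⁻¹ ≤ (c₂ * (Real.exp u - 1) * (2 / B)) ^ ν := by
    rw [h2keq, ← Real.inv_rpow hrk0.le]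
    exact Real.rpow_le_rpow (inv_nonneg.2 hrk0.le) hinv hν0.le
  have hbound : c₂ * (Real.exp u - 1) * (2 / B) ≤ 6 * c₂ * u := by
    have h1 : (Real.exp u - 1) * (2 / B) ≤ 3 * u * 2 :=
      mul_le_mul hε3u hr2 hr0.le (by positivity)
    nlinarith
  have h2kν : ((2:ℝ) ^ k)⁻¹ ≤ (6 * c₂) ^ ν * u ^ ν := by
    calc ((2:ℝ) ^ k)⁻¹ ≤ (c₂ * (Real.exp u - 1) * (2 / B)) ^ ν := h2k
      _ ≤ (6 * c₂ * u) ^ ν := by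
          apply Real.rpow_le_rpow (by positivity) hbound hν0.le
      _ = (6 * c₂) ^ ν * u ^ ν := Real.mul_rpow (by positivity) hu
  have h2m : (2:ℝ) ^ (n - k) = 2 ^ n * ((2:ℝ) ^ k)⁻¹ := by
    rw [← pow_sub₀ (2:ℝ) two_ne_zero hkn]
  have hexpbound : (2:ℝ) ^ (n - k) * Real.log 6 ≤ c * u ^ ν * 2 ^ n := by
    have hstep1 : ((2:ℝ) ^ k)⁻¹ * Real.log 6 ≤ ((6 * c₂) ^ ν * u ^ ν) * 2 :=
      mul_le_mul h2kν hlog6 hlog6' (by positivity)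
    have hstep2 : (2:ℝ) ^ n * (((2:ℝ) ^ k)⁻¹ * Real.log 6) ≤
        (2:ℝ) ^ n * (((6 * c₂) ^ ν * u ^ ν) * 2) :=
      mul_le_mul_of_nonneg_left hstep1 h2n0
    have hcfin : 2 * (6 * c₂) ^ ν ≤ c := by rw [hcdef]; linarith
    have hstep3 : 2 * (6 * c₂) ^ ν * (u ^ ν * 2 ^ n) ≤ c * (u ^ ν * 2 ^ n) :=
      mul_le_mul_of_nonneg_right hcfin (by positivity)
    calc (2:ℝ) ^ (n - k) * Real.log 6
        = (2:ℝ) ^ n * (((2:ℝ) ^ k)⁻¹ * Real.log 6) := by rw [h2m]; ring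
      _ ≤ (2:ℝ) ^ n * (((6 * c₂) ^ ν * u ^ ν) * 2) := hstep2
      _ = 2 * (6 * c₂) ^ ν * (u ^ ν * 2 ^ n) := by ring
      _ ≤ c * (u ^ ν * 2 ^ n) := hstep3
      _ = c * u ^ ν * 2 ^ n := by ring
  calc R n ≤ (6:ℝ) ^ (2 ^ (n - k)) := hRn6
    _ = Real.exp ((2:ℝ) ^ (n - k) * Real.log 6) := h6e
    _ ≤ c * Real.exp (c * u ^ ν * 2 ^ n) := hconc _ hexpbound
end

section
/- Let 1 < B < 2, ν = log 2/log(2/B), and let F(h) = lim_n 2^{-n} log R_n(h) be the free energy of the pure hierarchical pinning model, where R_0(h) = e^h and R_{n+1}(h) = (R_n(h)² + B−1)/B. Then there exist constants c_0, c_0' > 0 such that for all 0 ≤ h ≤ 1: c_0 h^ν ≤ F(h) ≤ c_0' h^ν. -/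
open Real Filter Finset

section Stmt18Aux

variable {B : ℝ} {R : ℕ → ℝ}

private lemma stmt18_one_le (hB1 : 1 < B) (hR0 : 1 ≤ R 0)
    (hrec : ∀ k, R (k + 1) = (R k ^ 2 + B - 1) / B) : ∀ n, 1 ≤ R n := by
  intro n
  induction n with
  | zero => exact hR0
  | succ k ih =>
    rw [hrec, le_div_iff₀ (by linarith)]
    nlinarith

private lemma stmt18_key (hB1 : 1 < B)
    (hrec : ∀ k, R (k + 1) = (R k ^ 2 + B - 1) / B) :
    ∀ k, B * (R (k + 1) - 1) = R k ^ 2 - 1 := by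
  intro k
  have hB0 : B ≠ 0 := by linarith
  rw [hrec]
  field_simp
  ring

private lemma stmt18_step (hB1 : 1 < B) (hR0 : 1 ≤ R 0)
    (hrec : ∀ k, R (k + 1) = (R k ^ 2 + B - 1) / B) :
    ∀ k, (2 / B) * (R k - 1) ≤ R (k + 1) - 1 := by
  intro k
  have hB0 : (0:ℝ) < B := by linarith
  have hk := stmt18_key hB1 hrec k
  have h1 := stmt18_one_le hB1 hR0 hrec k
  rw [div_mul_eq_mul_div, div_le_iff₀ hB0]
  nlinarith [sq_nonneg (R k - 1)]

private lemma stmt18_growth (hB1 : 1 < B) (hR0 : 1 ≤ R 0)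
    (hrec : ∀ k, R (k + 1) = (R k ^ 2 + B - 1) / B) :
    ∀ n, (2 / B) ^ n * (R 0 - 1) ≤ R n - 1 := by
  intro n
  have hB0 : (0:ℝ) < B := by linarith
  induction n with
  | zero => simp
  | succ k ih =>
    calc (2 / B) ^ (k + 1) * (R 0 - 1) = (2 / B) * ((2 / B) ^ k * (R 0 - 1)) := by ring
      _ ≤ (2 / B) * (R k - 1) := by
          apply mul_le_mul_of_nonneg_left ih (by positivity)
      _ ≤ R (k + 1) - 1 := stmt18_step hB1 hR0 hrec k

private lemma stmt18_sum (hB1 : 1 < B) (hB2 : B < 2) (hR0 : 1 ≤ R 0)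
    (hrec : ∀ k, R (k + 1) = (R k ^ 2 + B - 1) / B) :
    ∀ m, ∑ k ∈ range m, (R k - 1) ≤ (R m - 1) / (2 / B - 1) := by
  intro m
  have hB0 : (0:ℝ) < B := by linarith
  have hq1 : (1:ℝ) < 2 / B := (one_lt_div hB0).2 hB2
  have hq0 : (0:ℝ) < 2 / B - 1 := by linarith
  induction m with
  | zero =>
    simp
    apply div_nonneg (by linarith) (by linarith)
  | succ k ih =>
    have hstep := stmt18_step hB1 hR0 hrec k
    have h1 := stmt18_one_le hB1 hR0 hrec k
    have ih' : (∑ x ∈ range k, (R x - 1)) * (2 / B - 1) ≤ R k - 1 :=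
      (le_div_iff₀ hq0).1 ih
    rw [Finset.sum_range_succ, le_div_iff₀ hq0]
    nlinarith [ih', hstep]

private lemma stmt18_prod (hB1 : 1 < B) (hB2 : B < 2) (hR0 : 1 ≤ R 0)
    (hrec : ∀ k, R (k + 1) = (R k ^ 2 + B - 1) / B) :
    ∀ m, R m - 1 ≤ (2 / B) ^ m * (R 0 - 1) *
      Real.exp ((∑ k ∈ range m, (R k - 1)) / 2) := by
  intro m
  have hB0 : (0:ℝ) < B := by linarith
  induction m with
  | zero => simp
  | succ k ih =>
    have h1 := stmt18_one_le hB1 hR0 hrec k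
    have hk := stmt18_key hB1 hrec k
    have hu0 : (0:ℝ) ≤ R k - 1 := by linarith
    -- exact recursion: R (k+1) - 1 = (2/B) * (R k - 1) * (1 + (R k - 1)/2)
    have hexact : R (k + 1) - 1 = (2 / B) * (R k - 1) * (1 + (R k - 1) / 2) := by
      have : R (k + 1) - 1 = (R k ^ 2 - 1) / B := by
        rw [eq_div_iff (by linarith : B ≠ 0), mul_comm]
        exact hk
      rw [this]
      field_simp
      ring
    have hexp : 1 + (R k - 1) / 2 ≤ Real.exp ((R k - 1) / 2) := by
      have := Real.add_one_le_exp ((R k - 1) / 2)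
      linarith
    rw [hexact, Finset.sum_range_succ]
    calc (2 / B) * (R k - 1) * (1 + (R k - 1) / 2)
        ≤ (2 / B) * ((2 / B) ^ k * (R 0 - 1) * Real.exp ((∑ x ∈ range k, (R x - 1)) / 2))
            * Real.exp ((R k - 1) / 2) := by
          apply mul_le_mul
          · exact mul_le_mul_of_nonneg_left ih (by positivity)
          · exact hexp
          · linarith
          · refine mul_nonneg (by positivity) ?_
            exact mul_nonneg (mul_nonneg (by positivity) (by linarith)) (Real.exp_pos _).le
      _ = (2 / B) ^ (k + 1) * (R 0 - 1) *
            Real.exp ((∑ x ∈ range k, (R x - 1) + (R k - 1)) / 2) := by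
          rw [show (∑ x ∈ range k, (R x - 1) + (R k - 1)) / 2
              = (∑ x ∈ range k, (R x - 1)) / 2 + (R k - 1) / 2 by ring, Real.exp_add]
          ring

end Stmt18Aux

set_option maxHeartbeats 2000000 in
/-- Critical behavior of the pure hierarchical pinning model: with
`R 0 = e^h`, `R (n+1) = (R n² + B - 1)/B`, `1 < B < 2` and
`ν = log 2 / log(2/B)`, the free energy `F(h) = lim_n 2^{-n} log R n` exists
and there are constants `c₀, c₀' > 0` such that `c₀ h^ν ≤ F(h) ≤ c₀' h^ν` for
all `0 ≤ h ≤ 1`. -/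
theorem stmt18 (B : ℝ) (hB1 : 1 < B) (hB2 : B < 2) :
    ∃ c₀ > (0 : ℝ), ∃ c₀' > (0 : ℝ), ∀ h : ℝ, 0 ≤ h → h ≤ 1 →
      ∀ R : ℕ → ℝ, R 0 = Real.exp h → (∀ k, R (k + 1) = (R k ^ 2 + B - 1) / B) →
      ∃ F : ℝ,
        Filter.Tendsto (fun n : ℕ => Real.log (R n) / 2 ^ n)
          Filter.atTop (nhds F) ∧
        c₀ * h ^ (Real.log 2 / Real.log (2 / B)) ≤ F ∧
        F ≤ c₀' * h ^ (Real.log 2 / Real.log (2 / B)) := by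
  classical
  have hB0 : (0:ℝ) < B := by linarith
  set q : ℝ := 2 / B with hq_def
  clear_value q
  have hq1 : 1 < q := by rw [hq_def]; exact (one_lt_div hB0).2 hB2
  have hq0 : 0 < q := by linarith
  have hq2 : q < 2 := by rw [hq_def, div_lt_iff₀ hB0]; linarith
  have hlogq : 0 < Real.log q := Real.log_pos hq1
  set ν : ℝ := Real.log 2 / Real.log q with hν_def
  clear_value ν
  have hν0 : 0 < ν := by rw [hν_def]; exact div_pos (Real.log_pos one_lt_two) hlogq
  have hνlogq : ν * Real.log q = Real.log 2 := by
    rw [hν_def]; exact div_mul_cancel₀ _ (ne_of_gt hlogq)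
  set E : ℝ := Real.exp (B / (2 - B)) with hE_def
  clear_value E
  have hEpos : 0 < E := by rw [hE_def]; exact Real.exp_pos _
  refine ⟨((12:ℝ) ^ ν)⁻¹, by positivity, 4 * (4 * E) ^ ν, by positivity, ?_⟩
  intro h h0 h1 R hR0 hrec
  have hR0' : 1 ≤ R 0 := by rw [hR0]; linarith [Real.add_one_le_exp h]
  have hone := stmt18_one_le hB1 hR0' hrec
  have hRpos : ∀ n, 0 < R n := fun n => lt_of_lt_of_le one_pos (hone n)
  set a : ℕ → ℝ := fun n => Real.log (R n) / 2 ^ n with ha_def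
  clear_value a
  set b : ℕ → ℝ := fun n => (Real.log (R n) - Real.log B) / 2 ^ n with hb_def
  clear_value b
  have hpow2 : ∀ n : ℕ, (0:ℝ) < 2 ^ n := fun n => by positivity
  have ha_anti : Antitone a := by
    apply antitone_nat_of_succ_le
    intro n
    have hle : R (n + 1) ≤ R n ^ 2 := by
      rw [hrec, div_le_iff₀ hB0]
      nlinarith [hone n, mul_nonneg (by linarith : (0:ℝ) ≤ B - 1)
        (by nlinarith [hone n] : (0:ℝ) ≤ R n ^ 2 - 1)]
    have hlog : Real.log (R (n + 1)) ≤ 2 * Real.log (R n) := by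
      calc Real.log (R (n + 1)) ≤ Real.log (R n ^ 2) :=
            Real.log_le_log (hRpos _) hle
        _ = 2 * Real.log (R n) := by rw [Real.log_pow]; push_cast; ring
    simp only [ha_def]
    rw [div_le_div_iff₀ (hpow2 _) (hpow2 _), pow_succ]
    nlinarith [mul_le_mul_of_nonneg_right hlog (hpow2 n).le]
  have hb_mono : Monotone b := by
    apply monotone_nat_of_le_succ
    intro n
    have hBR : R n ^ 2 ≤ B * R (n + 1) := by
      nlinarith [stmt18_key hB1 hrec n]
    have hlog : 2 * Real.log (R n) ≤ Real.log B + Real.log (R (n + 1)) := by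
      have h2 : Real.log (R n ^ 2) ≤ Real.log (B * R (n + 1)) :=
        Real.log_le_log (pow_pos (hRpos n) 2) hBR
      rw [Real.log_pow, Real.log_mul (ne_of_gt hB0) (ne_of_gt (hRpos _))] at h2
      push_cast at h2
      linarith
    simp only [hb_def]
    rw [div_le_div_iff₀ (hpow2 _) (hpow2 _), pow_succ]
    nlinarith [mul_le_mul_of_nonneg_right hlog (hpow2 n).le]
  have hba : ∀ n, b n ≤ a n := by
    intro n
    simp only [ha_def, hb_def]
    have hlB := Real.log_pos hB1
    rw [div_le_div_iff₀ (hpow2 n) (hpow2 n)]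
    nlinarith [mul_le_mul_of_nonneg_right
      (by linarith : Real.log (R n) - Real.log B ≤ Real.log (R n)) (hpow2 n).le]
  have hbdd : BddBelow (Set.range a) := by
    refine ⟨b 0, ?_⟩
    rintro x ⟨n, rfl⟩
    exact (hb_mono (Nat.zero_le n)).trans (hba n)
  set F : ℝ := ⨅ n, a n with hF_def
  clear_value F
  have htend : Filter.Tendsto a Filter.atTop (nhds F) := by
    rw [hF_def]; exact tendsto_atTop_ciInf ha_anti hbdd
  have hFa : ∀ n, F ≤ a n := fun n => hF_def ▸ ciInf_le hbdd n
  have hbF : ∀ n, b n ≤ F := by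
    intro n
    rw [hF_def]
    apply le_ciInf
    intro m
    rcases le_total n m with hnm | hmn
    · exact (hb_mono hnm).trans (hba m)
    · exact (hba n).trans (ha_anti hmn)
  have hq_pow : ∀ n : ℕ, ((q:ℝ) ^ n) ^ ν = 2 ^ n := by
    intro n
    rw [← Real.rpow_natCast q n, ← Real.rpow_natCast 2 n, ← Real.rpow_mul hq0.le]
    rw [Real.rpow_def_of_pos hq0, Real.rpow_def_of_pos two_pos]
    congr 1
    rw [show Real.log q * ((n:ℝ) * ν) = (n:ℝ) * (ν * Real.log q) by ring, hνlogq]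
    ring
  have hF0 : h = 0 → F = 0 := by
    intro hz
    have hRall : ∀ n, R n = 1 := by
      intro n
      induction n with
      | zero => rw [hR0, hz, Real.exp_zero]
      | succ k ih =>
        rw [hrec, ih]
        field_simp
        ring
    have haz : a = fun _ => (0:ℝ) := by
      funext n
      simp [ha_def, hRall n]
    rw [hF_def, haz]
    exact ciInf_const
  refine ⟨F, htend, ?_, ?_⟩
  · -- lower bound
    rcases h0.eq_or_lt with hz | hp
    · rw [← hz, Real.zero_rpow hν0.ne', mul_zero, hF0 hz.symm]
    · obtain ⟨N, hN⟩ := pow_unbounded_of_one_lt (6 / h) hq1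
      have hPex : ∃ n, 6 < q ^ n * h := ⟨N, by rwa [← div_lt_iff₀ hp]⟩
      set n := Nat.find hPex with hn_def
      have hn6 : 6 < q ^ n * h := Nat.find_spec hPex
      have hn1 : 1 ≤ n := by
        by_contra hc
        have hn0 : n = 0 := by omega
        rw [hn0] at hn6
        simp at hn6
        linarith
      have hprev : ¬ 6 < q ^ (n - 1) * h := Nat.find_min hPex (by omega)
      push_neg at hprev
      have hq12 : q ^ n * h ≤ 12 := by
        have hsp : q ^ n = q * q ^ (n - 1) := by
          conv_lhs => rw [show n = (n - 1) + 1 by omega]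
          rw [pow_succ]; ring
        rw [hsp]
        calc q * q ^ (n - 1) * h = q * (q ^ (n - 1) * h) := by ring
          _ ≤ q * 6 := mul_le_mul_of_nonneg_left hprev hq0.le
          _ ≤ 12 := by linarith
      have hqn : q ^ n ≤ 12 / h := (le_div_iff₀ hp).2 hq12
      have hgrow := stmt18_growth hB1 hR0' hrec n
      have hexph : h ≤ R 0 - 1 := by rw [hR0]; linarith [Real.add_one_le_exp h]
      have hRn : 7 ≤ R n := by
        have hmm : q ^ n * h ≤ q ^ n * (R 0 - 1) :=
          mul_le_mul_of_nonneg_left hexph (by positivity)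
        rw [← hq_def] at hgrow
        linarith
      have hlog72 : 1 ≤ Real.log (R n) - Real.log B := by
        have l1 : Real.log B ≤ Real.log 2 := Real.log_le_log hB0 hB2.le
        have l2 : Real.log 7 ≤ Real.log (R n) := Real.log_le_log (by norm_num) hRn
        have l3 : Real.log (7/2) = Real.log 7 - Real.log 2 :=
          Real.log_div (by norm_num) (by norm_num)
        have l4 : Real.exp 1 ≤ 7/2 := by
          have := Real.exp_one_lt_d9
          norm_num at this ⊢
          linarith
        have l5 : 1 ≤ Real.log (7/2) :=
          (Real.le_log_iff_exp_le (by norm_num : (0:ℝ) < 7/2)).2 l4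
        linarith
      have hFlow : 1 / 2 ^ n ≤ F := by
        refine le_trans ?_ (hbF n)
        simp only [hb_def]
        gcongr
      have h2n : (2:ℝ) ^ n ≤ 12 ^ ν / h ^ ν := by
        rw [← hq_pow n, ← Real.div_rpow (by norm_num) h0]
        exact Real.rpow_le_rpow (by positivity) hqn hν0.le
      have hhν : 0 < h ^ ν := Real.rpow_pos_of_pos hp ν
      have h12ν : 0 < (12:ℝ) ^ ν := Real.rpow_pos_of_pos (by norm_num) ν
      have hmul : h ^ ν * 2 ^ n ≤ 12 ^ ν := by
        have hthis := mul_le_mul_of_nonneg_left h2n hhν.le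
        rw [mul_comm (h ^ ν) (12 ^ ν / h ^ ν), div_mul_cancel₀ _ (ne_of_gt hhν)] at hthis
        exact hthis
      calc ((12:ℝ) ^ ν)⁻¹ * h ^ ν ≤ 1 / 2 ^ n := by
            rw [inv_mul_eq_div, div_le_div_iff₀ h12ν (hpow2 n)]
            linarith
        _ ≤ F := hFlow
  · -- upper bound
    rcases h0.eq_or_lt with hz | hp
    · rw [← hz, Real.zero_rpow hν0.ne', mul_zero, hF0 hz.symm]
    · obtain ⟨N, hN⟩ := pow_unbounded_of_one_lt (2 / h) hq1
      have hPex : ∃ n, 3 < R n := by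
        refine ⟨N, ?_⟩
        have h2 : 2 < q ^ N * h := by rwa [← div_lt_iff₀ hp]
        have hg := stmt18_growth hB1 hR0' hrec N
        have hexph : h ≤ R 0 - 1 := by rw [hR0]; linarith [Real.add_one_le_exp h]
        have hmm : q ^ N * h ≤ q ^ N * (R 0 - 1) :=
          mul_le_mul_of_nonneg_left hexph (by positivity)
        rw [← hq_def] at hg
        linarith
      set m' := Nat.find hPex with hm'_def
      have hm'spec : 3 < R m' := by rw [hm'_def]; exact Nat.find_spec hPex
      have hm'min : ∀ k, k < m' → ¬ 3 < R k := by
        intro k hk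
        exact Nat.find_min hPex (hm'_def ▸ hk)
      clear_value m'
      have hm'1 : 1 ≤ m' := by
        by_contra hc
        have hm0 : m' = 0 := by omega
        rw [hm0, hR0] at hm'spec
        have : Real.exp h ≤ Real.exp 1 := Real.exp_le_exp.2 h1
        have := Real.exp_one_lt_d9
        norm_num at this
        linarith
      set m := m' - 1 with hm_def
      clear_value m
      have hmm : m + 1 = m' := by omega
      have hm1 : R m ≤ 3 := by
        have hmin := hm'min m (by omega)
        push_neg at hmin
        exact hmin
      have hm2 : 3 < R (m + 1) := by rw [hmm]; exact hm'spec
      have hum : R m - 1 ≤ 2 := by linarith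
      have hum0 : 0 ≤ R m - 1 := by linarith [hone m]
      have hk := stmt18_key hB1 hrec m
      have h4 : R (m + 1) - 1 ≤ 4 * (R m - 1) := by
        nlinarith [hone (m + 1), hone m,
          mul_nonneg (by linarith : (0:ℝ) ≤ B - 1) (by linarith [hone (m+1)] : (0:ℝ) ≤ R (m+1) - 1),
          mul_nonneg (by linarith : (0:ℝ) ≤ 3 - R m) hum0]
      have humlow : 1/2 < R m - 1 := by linarith
      have hprod := stmt18_prod hB1 hB2 hR0' hrec m
      have hsum := stmt18_sum hB1 hB2 hR0' hrec m
      rw [← hq_def] at hprod hsum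
      have hq0' : 0 < q - 1 := by linarith
      have hqinv : q - 1 = (2 - B) / B := by
        rw [hq_def]
        field_simp
      have h2B : (0:ℝ) < 2 - B := by linarith
      have hSle : (∑ k ∈ range m, (R k - 1)) / 2 ≤ B / (2 - B) := by
        have hs2 : (R m - 1) / (q - 1) ≤ 2 / (q - 1) := by gcongr
        have hs3 : 2 / (q - 1) = 2 * B / (2 - B) := by
          rw [hqinv, div_div_eq_mul_div]
        have hs4 : (∑ k ∈ range m, (R k - 1)) ≤ 2 * B / (2 - B) := by
          calc (∑ k ∈ range m, (R k - 1)) ≤ (R m - 1) / (q - 1) := hsum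
            _ ≤ 2 / (q - 1) := hs2
            _ = 2 * B / (2 - B) := hs3
        have hs5 : (∑ k ∈ range m, (R k - 1)) * (2 - B) ≤ 2 * B :=
          (le_div_iff₀ h2B).1 hs4
        rw [div_le_div_iff₀ two_pos h2B]
        linarith
      have hexpS : Real.exp ((∑ k ∈ range m, (R k - 1)) / 2) ≤ E := by
        rw [hE_def]
        exact Real.exp_le_exp.2 hSle
      have hu0le : R 0 - 1 ≤ 2 * h := by
        rw [hR0]
        have hc := convexOn_exp.2 (Set.mem_univ (0:ℝ)) (Set.mem_univ (1:ℝ))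
          (by linarith : (0:ℝ) ≤ 1 - h) h0 (by ring)
        simp only [smul_eq_mul, mul_zero, mul_one, zero_add, Real.exp_zero] at hc
        have he : Real.exp 1 ≤ 3 := by
          have := Real.exp_one_lt_d9
          norm_num at this
          linarith
        nlinarith [hc, he]
      have hml : 1/2 < q ^ m * (2 * h) * E := by
        calc (1:ℝ)/2 < R m - 1 := humlow
          _ ≤ q ^ m * (R 0 - 1) * Real.exp ((∑ k ∈ range m, (R k - 1)) / 2) := hprod
          _ ≤ q ^ m * (2 * h) * E := by
              apply mul_le_mul (mul_le_mul_of_nonneg_left hu0le (by positivity)) hexpS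
                (Real.exp_pos _).le (by positivity)
      have h4Eh : (0:ℝ) < 4 * E * h := by positivity
      have hqm : (4 * E * h)⁻¹ ≤ q ^ m := by
        rw [inv_eq_one_div, div_le_iff₀ h4Eh]
        nlinarith [hml]
      have h2m : ((4 * E * h) ^ ν)⁻¹ ≤ (2:ℝ) ^ m := by
        rw [← hq_pow m, ← Real.inv_rpow h4Eh.le]
        exact Real.rpow_le_rpow (by positivity) hqm hν0.le
      have hlogm : Real.log (R (m + 1)) ≤ 8 := by
        have := Real.log_le_sub_one_of_pos (hRpos (m + 1))
        linarith
      have hFup : F ≤ 4 / 2 ^ m := by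
        refine (hFa (m + 1)).trans ?_
        simp only [ha_def]
        rw [div_le_div_iff₀ (hpow2 (m + 1)) (hpow2 m), pow_succ]
        nlinarith [mul_le_mul_of_nonneg_right hlogm (hpow2 m).le]
      have hrν : (4 * E * h) ^ ν = (4 * E) ^ ν * h ^ ν := Real.mul_rpow (by positivity) h0
      have hEν : 0 < (4 * E * h) ^ ν := Real.rpow_pos_of_pos h4Eh ν
      calc F ≤ 4 / 2 ^ m := hFup
        _ ≤ 4 * ((4 * E) ^ ν * h ^ ν) := by
            rw [div_le_iff₀ (hpow2 m)]
            have h1' : 1 ≤ (4 * E * h) ^ ν * 2 ^ m := by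
              have hthis := mul_le_mul_of_nonneg_left h2m hEν.le
              rwa [mul_inv_cancel₀ (ne_of_gt hEν)] at hthis
            rw [← hrν]
            nlinarith [h1']
        _ = 4 * (4 * E) ^ ν * h ^ ν := by ring
end
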